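/- arXiv:1907.08587 — 2 statements merged into one kernel-verified Lean document; each statement's English description precedes it below -/
import Mathlib

section
/- Let P be a real symmetric positive definite 3×3 matrix with three distinct eigenvalues, and let v₁, v₂, v₃ be unit eigenvectors of P corresponding to its three eigenvalues. Then for any R ∈ SO(3), the matrix PR − RᵀP equals zero if and only if R belongs to the set Θ = {I, exp(π v̂₁), exp(π v̂₂), exp(π v̂₃)}. (Equivalently, the configuration error function ψ(R) = ½ tr(P(I − R)) has exactly these 4 critical points on SO(3).) -/
open Matrix NormedSpace

/-- The hat map sending `v ∈ ℝ³` to the skew-symmetric matrix `v̂` with `v̂ w = v × w`. -/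
def hat (v : Fin 3 → ℝ) : Matrix (Fin 3) (Fin 3) ℝ :=
  !![0, -v 2, v 1; v 2, 0, -v 0; -v 1, v 0, 0]

/-- `SO(3)`: real 3×3 matrices with `RᵀR = I` and `det R = 1`. -/
def SO3 : Set (Matrix (Fin 3) (Fin 3) ℝ) := {R | Rᵀ * R = 1 ∧ R.det = 1}

/-!
If `P R = Rᵀ P` and `R` is orthogonal, then `M = P R` is symmetric with `M² = P²`, so `M`
commutes with `P²`. The eigenvalues of `P` are positive and distinct, hence so are those of `P²`,
and `M`, therefore `R`, preserves each eigenline `ℝ vᵢ`. Orthogonality forces `R vᵢ = ± vᵢ`, and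
`det R = 1` leaves either no sign or exactly two signs negative, i.e. `R = I` or
`R = 2 vᵢ vᵢᵀ - I`. By Rodrigues' formula `exp (t v̂) = I + sin t v̂ + (1 - cos t) v̂²` (valid as
`v̂³ = -v̂` for a unit vector `v`), the latter is `exp (π v̂ᵢ)`. Conversely `2 vᵢ vᵢᵀ - I` is
symmetric and commutes with `P`.
-/

open scoped Nat

section Rodrigues

variable {𝔸 : Type*} [Ring 𝔸] [Algebra ℝ 𝔸] {A : 𝔸}

theorem pow_two_mul_add_one_of_mul_mul_self_eq_neg (hA : A * A * A = -A) (k : ℕ) :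
    A ^ (2 * k + 1) = (-1 : ℝ) ^ k • A := by
  induction k with
  | zero => simp
  | succ k ih =>
    rw [show 2 * (k + 1) + 1 = 2 * k + 1 + 2 by ring, pow_add, ih, pow_two, smul_mul_assoc,
      ← mul_assoc, hA, pow_succ, mul_neg_one, neg_smul, smul_neg]

theorem pow_two_mul_add_two_of_mul_mul_self_eq_neg (hA : A * A * A = -A) (k : ℕ) :
    A ^ (2 * k + 2) = (-1 : ℝ) ^ k • (A * A) := by
  rw [pow_succ, pow_two_mul_add_one_of_mul_mul_self_eq_neg hA, smul_mul_assoc]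

theorem exp_smul_of_mul_mul_self_eq_neg [TopologicalSpace 𝔸] [IsTopologicalRing 𝔸]
    [ContinuousSMul ℝ 𝔸] [T2Space 𝔸] (hA : A * A * A = -A) (t : ℝ) :
    exp (t • A) = 1 + Real.sin t • A + (1 - Real.cos t) • (A * A) := by
  set f : ℕ → 𝔸 := fun n ↦ (n ! : ℝ)⁻¹ • (t • A) ^ n
  have hodd : HasSum (fun k ↦ f (2 * k + 1)) (Real.sin t • A) := by
    refine (Real.hasSum_sin t).smul_const A |>.congr_fun fun k ↦ ?_
    simp only [f]
    rw [smul_pow, pow_two_mul_add_one_of_mul_mul_self_eq_neg hA, smul_smul, smul_smul]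
    ring_nf
  -- `A ^ (2 * k) = (-1) ^ k • -(A * A)` except at `k = 0`, where the `ite` term corrects it.
  have heven : HasSum (fun k ↦ f (2 * k)) (Real.cos t • -(A * A) + (1 + A * A)) := by
    refine ((Real.hasSum_cos t).smul_const (-(A * A))).add (hasSum_ite_eq 0 (1 + A * A))
      |>.congr_fun fun k ↦ ?_
    rcases k with _ | k
    · simp [f]
    · simp only [f]
      rw [smul_pow, show 2 * (k + 1) = 2 * k + 2 by ring,
        pow_two_mul_add_two_of_mul_mul_self_eq_neg hA, smul_smul, smul_smul, if_neg k.succ_ne_zero,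
        add_zero, smul_neg, ← neg_smul, pow_succ]
      ring_nf
  rw [exp_eq_tsum ℝ]
  exact (heven.even_add_odd hodd).tsum_eq.trans (by module)

end Rodrigues

theorem hat_mul_hat (v : Fin 3 → ℝ) : hat v * hat v = vecMulVec v v - (v ⬝ᵥ v) • 1 := by
  ext i j
  fin_cases i <;> fin_cases j <;>
    simp [hat, mul_apply, Fin.sum_univ_three, vecMulVec_apply, dotProduct, one_apply] <;> ring

theorem vecMul_hat_self (v : Fin 3 → ℝ) : v ᵥ* hat v = 0 := by
  ext i
  fin_cases i <;> simp [hat, vecMul, dotProduct, Fin.sum_univ_three] <;> ring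

theorem hat_mul_hat_mul_hat (v : Fin 3 → ℝ) : hat v * hat v * hat v = -(v ⬝ᵥ v) • hat v := by
  rw [hat_mul_hat, sub_mul, vecMulVec_mul, vecMul_hat_self, vecMulVec_zero, smul_mul_assoc,
    one_mul, zero_sub, neg_smul]

theorem exp_pi_smul_hat {v : Fin 3 → ℝ} (hv : v ⬝ᵥ v = 1) :
    exp (Real.pi • hat v) = (2 : ℝ) • vecMulVec v v - 1 := by
  have hcube := hat_mul_hat_mul_hat v
  rw [hv, neg_smul, one_smul] at hcube
  rw [exp_smul_of_mul_mul_self_eq_neg hcube, Real.sin_pi, Real.cos_pi, hat_mul_hat, hv, one_smul]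
  module

section Spectral

variable {n : Type*} [Fintype n] {P R : Matrix n n ℝ}

theorem Matrix.IsSymm.mulVec_dotProduct (hP : P.IsSymm) (x y : n → ℝ) :
    (P *ᵥ x) ⬝ᵥ y = x ⬝ᵥ (P *ᵥ y) := by
  rw [dotProduct_mulVec, ← vecMul_transpose, hP.eq]

theorem Matrix.IsSymm.dotProduct_eq_zero_of_mulVec_eq_smul (hP : P.IsSymm) {u w : n → ℝ}
    {a b : ℝ} (hu : P *ᵥ u = a • u) (hw : P *ᵥ w = b • w) (hab : a ≠ b) : u ⬝ᵥ w = 0 := by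
  have h := hP.mulVec_dotProduct u w
  rw [hu, hw, smul_dotProduct, dotProduct_smul, smul_eq_mul, smul_eq_mul] at h
  exact (mul_eq_mul_right_iff.mp h).resolve_left hab

theorem Matrix.PosDef.pos_of_mulVec_eq_smul (hP : P.PosDef) {v : n → ℝ} {a : ℝ}
    (hv : P *ᵥ v = a • v) (hv0 : v ≠ 0) : 0 < a := by
  have h := hP.dotProduct_mulVec_pos hv0
  rw [hv, dotProduct_smul, star_trivial, smul_eq_mul] at h
  exact pos_of_mul_pos_left h (by simpa using dotProduct_star_self_nonneg v)

variable [DecidableEq n]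

theorem Matrix.IsSymm.mul_eq_transpose_mul_of_mulVec_eq_smul (hP : P.IsSymm)
    {v : n → ℝ} {a : ℝ} (hv : P *ᵥ v = a • v) :
    P * ((2 : ℝ) • vecMulVec v v - 1) = ((2 : ℝ) • vecMulVec v v - 1)ᵀ * P := by
  have hcomm : P * vecMulVec v v = vecMulVec v v * P := by
    rw [mul_vecMulVec, vecMulVec_mul, ← mulVec_transpose, hP.eq, hv, smul_vecMulVec,
      vecMulVec_smul]
  rw [transpose_sub, transpose_smul, transpose_vecMulVec, transpose_one, mul_sub, sub_mul,
    mul_smul_comm, smul_mul_assoc, hcomm, mul_one, one_mul]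

theorem dotProduct_mulVec_eq_zero_of_mul_eq_transpose_mul (hP : P.IsSymm) (hR : Rᵀ * R = 1)
    (hPR : P * R = Rᵀ * P) {u w : n → ℝ} {a b : ℝ} (hu : P *ᵥ u = a • u)
    (hw : P *ᵥ w = b • w) (ha : 0 < a) (hb : 0 < b) (hab : a ≠ b) : w ⬝ᵥ (R *ᵥ u) = 0 := by
  have hsq : P * R * (P * R) = P * P := by
    calc P * R * (P * R) = P * R * (Rᵀ * P) := by rw [← hPR]
    _ = P * (R * Rᵀ) * P := by simp only [mul_assoc]
    _ = P * P := by rw [mul_eq_one_comm.mp hR, mul_one]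
  have hcomm : P * P * (P * R) = P * R * (P * P) := by rw [← hsq, mul_assoc]
  have hPP : (P * P).IsSymm := by rw [IsSymm, transpose_mul, hP.eq]
  have hsq_eig : ∀ {x : n → ℝ} {c : ℝ}, P *ᵥ x = c • x → (P * P) *ᵥ x = (c * c) • x :=
    fun hx ↦ by rw [← mulVec_mulVec, hx, mulVec_smul, hx, smul_smul]
  have hMu : (P * P) *ᵥ ((P * R) *ᵥ u) = (a * a) • ((P * R) *ᵥ u) := by
    rw [mulVec_mulVec, hcomm, ← mulVec_mulVec, hsq_eig hu, mulVec_smul]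
  have hab_sq : b * b ≠ a * a := fun h ↦ hab ((mul_self_inj ha.le hb.le).mp h.symm)
  have h0 := hPP.dotProduct_eq_zero_of_mulVec_eq_smul (hsq_eig hw) hMu hab_sq
  rw [← mulVec_mulVec, ← hP.mulVec_dotProduct, hw, smul_dotProduct, smul_eq_mul] at h0
  exact (mul_eq_zero.mp h0).resolve_left hb.ne'

theorem eq_one_or_eq_neg_one_of_mulVec_eq_smul (hR : Rᵀ * R = 1) {x : n → ℝ} {s : ℝ}
    (hx : R *ᵥ x = s • x) (hx0 : x ≠ 0) : s = 1 ∨ s = -1 := by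
  have h : (R *ᵥ x) ⬝ᵥ (R *ᵥ x) = x ⬝ᵥ x := by
    rw [dotProduct_mulVec, ← mulVec_transpose, mulVec_mulVec, hR, one_mulVec]
  rw [hx, smul_dotProduct, dotProduct_smul, smul_smul, smul_eq_mul] at h
  have hxx : x ⬝ᵥ x ≠ 0 := fun h ↦ hx0 (dotProduct_self_eq_zero.mp h)
  exact mul_self_eq_one_iff.mp ((mul_eq_right₀ hxx).mp h)

variable {v : n → n → ℝ}

theorem of_mul_transpose_eq_one (hv : ∀ i j, v i ⬝ᵥ v j = if i = j then 1 else 0) :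
    of v * (of v)ᵀ = 1 := by
  ext i j
  simpa [mul_apply, dotProduct, one_apply] using hv i j

theorem sum_vecMulVec_self_eq_one (hv : ∀ i j, v i ⬝ᵥ v j = if i = j then 1 else 0) :
    ∑ i, vecMulVec (v i) (v i) = 1 := by
  rw [← mul_eq_one_comm.mp (of_mul_transpose_eq_one hv)]
  ext a b
  simp [mul_apply, Matrix.sum_apply, vecMulVec_apply]

theorem mulVec_eq_smul_of_dotProduct_mulVec_eq_zero
    (hv : ∀ i j, v i ⬝ᵥ v j = if i = j then 1 else 0) {i : n}
    (hoff : ∀ j, j ≠ i → v j ⬝ᵥ (R *ᵥ v i) = 0) :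
    R *ᵥ v i = (v i ⬝ᵥ (R *ᵥ v i)) • v i := by
  have hx := congrArg (· *ᵥ (R *ᵥ v i)) (sum_vecMulVec_self_eq_one hv)
  simp only [sum_mulVec, vecMulVec_mulVec, op_smul_eq_smul, one_mulVec] at hx
  rw [Finset.sum_eq_single i (fun j _ hj ↦ by rw [hoff j hj, zero_smul]) (by simp)] at hx
  exact hx.symm

theorem eq_sum_smul_vecMulVec_of_mulVec_eq_smul
    (hv : ∀ i j, v i ⬝ᵥ v j = if i = j then 1 else 0) {s : n → ℝ}
    (hRv : ∀ i, R *ᵥ v i = s i • v i) : R = ∑ i, s i • vecMulVec (v i) (v i) := by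
  calc R = R * ∑ i, vecMulVec (v i) (v i) := by rw [sum_vecMulVec_self_eq_one hv, mul_one]
  _ = ∑ i, s i • vecMulVec (v i) (v i) := by
    simp only [Finset.mul_sum, mul_vecMulVec, hRv, smul_vecMulVec]

theorem det_eq_prod_of_mulVec_eq_smul (hv : ∀ i j, v i ⬝ᵥ v j = if i = j then 1 else 0)
    {s : n → ℝ} (hRv : ∀ i, R *ᵥ v i = s i • v i) : R.det = ∏ i, s i := by
  have hRV : R * (of v)ᵀ = (of v)ᵀ * diagonal s := by
    ext a i
    rw [mul_diagonal]
    simpa [mul_apply, mulVec, dotProduct, mul_comm] using congrFun (hRv i) a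
  have hV : (of v)ᵀ.det ≠ 0 := by
    have h := congrArg det (of_mul_transpose_eq_one hv)
    rw [det_mul, det_one] at h
    exact right_ne_zero_of_mul_eq_one h
  have h := congrArg det hRV
  rw [det_mul, det_mul, det_diagonal, mul_comm] at h
  exact mul_left_cancel₀ hV h

end Spectral

theorem sum_smul_mem_of_prod_eq_one {A : Type*} [Ring A] [Module ℝ A] {E : Fin 3 → A}
    (hE : ∑ i, E i = 1) {s : Fin 3 → ℝ} (hs : ∀ i, s i = 1 ∨ s i = -1) (hprod : ∏ i, s i = 1) :
    ∑ i, s i • E i ∈ ({1, (2 : ℝ) • E 0 - 1, (2 : ℝ) • E 1 - 1, (2 : ℝ) • E 2 - 1} : Set A) := by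
  rw [Fin.sum_univ_three] at hE ⊢
  rw [Fin.prod_univ_three] at hprod
  simp only [Set.mem_insert_iff, Set.mem_singleton_iff, ← hE]
  rcases hs 0 with h0 | h0 <;> rcases hs 1 with h1 | h1 <;> rcases hs 2 with h2 | h2 <;>
    rw [h0, h1, h2] at hprod ⊢ <;> norm_num at hprod
  · left; module
  · right; left; module
  · right; right; left; module
  · right; right; right; module

/-- For a symmetric positive definite `P` with three distinct eigenvalues and unit
eigenvectors `v₁, v₂, v₃`, the skew part `PR − RᵀP` vanishes for `R ∈ SO(3)` exactly when
`R ∈ Θ = {I, exp(π v̂₁), exp(π v̂₂), exp(π v̂₃)}`; i.e. the configuration error function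
`ψ(R) = ½ tr(P(I − R))` has exactly these 4 critical points. -/
theorem critical_points_of_configuration_error
    (P : Matrix (Fin 3) (Fin 3) ℝ) (hPsymm : P.IsSymm) (hPpos : P.PosDef)
    (μ₁ μ₂ μ₃ : ℝ) (hμ12 : μ₁ ≠ μ₂) (hμ13 : μ₁ ≠ μ₃) (hμ23 : μ₂ ≠ μ₃)
    (v₁ v₂ v₃ : Fin 3 → ℝ)
    (hv₁ : v₁ ⬝ᵥ v₁ = 1) (hv₂ : v₂ ⬝ᵥ v₂ = 1) (hv₃ : v₃ ⬝ᵥ v₃ = 1)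
    (hev₁ : P *ᵥ v₁ = μ₁ • v₁) (hev₂ : P *ᵥ v₂ = μ₂ • v₂) (hev₃ : P *ᵥ v₃ = μ₃ • v₃)
    (R : Matrix (Fin 3) (Fin 3) ℝ) (hR : R ∈ SO3) :
    P * R - Rᵀ * P = 0 ↔
      R ∈ ({1, NormedSpace.exp (Real.pi • hat v₁), NormedSpace.exp (Real.pi • hat v₂),
            NormedSpace.exp (Real.pi • hat v₃)} : Set (Matrix (Fin 3) (Fin 3) ℝ)) := by
  set v : Fin 3 → Fin 3 → ℝ := ![v₁, v₂, v₃]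
  set μ : Fin 3 → ℝ := ![μ₁, μ₂, μ₃]
  have hev : ∀ i, P *ᵥ v i = μ i • v i := by simp [Fin.forall_fin_succ, v, μ, hev₁, hev₂, hev₃]
  have hunit : ∀ i, v i ⬝ᵥ v i = 1 := by simp [Fin.forall_fin_succ, v, hv₁, hv₂, hv₃]
  have hne : ∀ i, v i ≠ 0 := fun i h ↦ by simpa [h] using hunit i
  have hμ : ∀ i j, i ≠ j → μ i ≠ μ j := by
    simp [Fin.forall_fin_succ, μ, hμ12, hμ13, hμ23, hμ12.symm, hμ13.symm, hμ23.symm]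
  have hpos : ∀ i, 0 < μ i := fun i ↦ hPpos.pos_of_mulVec_eq_smul (hev i) (hne i)
  have hv : ∀ i j, v i ⬝ᵥ v j = if i = j then 1 else 0 := by
    intro i j
    split_ifs with hij
    · exact hij ▸ hunit i
    · exact hPsymm.dotProduct_eq_zero_of_mulVec_eq_smul (hev i) (hev j) (hμ i j hij)
  rw [exp_pi_smul_hat hv₁, exp_pi_smul_hat hv₂, exp_pi_smul_hat hv₃, sub_eq_zero]
  constructor
  · intro hPR
    have hRv : ∀ i, R *ᵥ v i = (v i ⬝ᵥ (R *ᵥ v i)) • v i := fun i ↦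
      mulVec_eq_smul_of_dotProduct_mulVec_eq_zero hv fun j hj ↦
        dotProduct_mulVec_eq_zero_of_mul_eq_transpose_mul hPsymm hR.1 hPR (hev i) (hev j)
          (hpos i) (hpos j) (hμ i j hj.symm)
    rw [eq_sum_smul_vecMulVec_of_mulVec_eq_smul hv hRv]
    exact sum_smul_mem_of_prod_eq_one (sum_vecMulVec_self_eq_one hv)
      (fun i ↦ eq_one_or_eq_neg_one_of_mulVec_eq_smul hR.1 (hRv i) (hne i))
      (det_eq_prod_of_mulVec_eq_smul hv hRv ▸ hR.2)
  · rintro (rfl | rfl | rfl | rfl)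
    · simp
    · exact hPsymm.mul_eq_transpose_mul_of_mulVec_eq_smul hev₁
    · exact hPsymm.mul_eq_transpose_mul_of_mulVec_eq_smul hev₂
    · exact hPsymm.mul_eq_transpose_mul_of_mulVec_eq_smul hev₃
end

section
/- Let P be a real symmetric positive definite 3×3 matrix. Then for every R ∈ SO(3), ψ(R) = ½ tr(P(I − R)) ≥ 0, and ψ(R) = 0 if and only if R = I. -/
open Matrix

/-- The configuration error function `ψ(R) = ½ tr(P(I − R))`. -/
noncomputable def ψ (P R : Matrix (Fin 3) (Fin 3) ℝ) : ℝ :=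
  (1 / 2 : ℝ) * (P * (1 - R)).trace

/-!
With `M = I − R`, orthogonality of `R` and symmetry of `P` give
`tr(Mᵀ P M) = 2 tr(P M)`, so `ψ(R) = ¼ tr(Mᵀ P M)`. The matrix `Mᵀ P M` is positive
semidefinite, and since `P` is positive definite its trace vanishes only when `M = 0`.
-/

namespace Matrix

open scoped ComplexOrder

variable {n m 𝕜 : Type*} [Fintype n] [Fintype m]

theorem trace_transpose_mul_mul_one_sub_eq {α : Type*} [CommRing α] [DecidableEq n]
    {P R : Matrix n n α} (hP : P.IsSymm) (hR : Rᵀ * R = 1) :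
    ((1 - R)ᵀ * P * (1 - R)).trace = 2 * (P * (1 - R)).trace := by
  have hRtP : (Rᵀ * P).trace = (P * R).trace := by
    rw [← trace_transpose, transpose_mul, transpose_transpose, hP.eq, trace_mul_comm]
  have hRPR : (Rᵀ * (P * R)).trace = P.trace := by
    rw [trace_mul_comm, mul_assoc, mul_eq_one_comm.mp hR, mul_one]
  have expand : (1 - R)ᵀ * P * (1 - R) = P - P * R - Rᵀ * P + Rᵀ * (P * R) := by
    simp only [transpose_sub, transpose_one, sub_mul, mul_sub, one_mul, mul_one, mul_assoc]
    abel
  rw [expand, trace_add, trace_sub, trace_sub, hRtP, hRPR, mul_sub, mul_one, trace_sub]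
  ring

theorem PosDef.conjTranspose_mul_mul_same_eq_zero_iff [RCLike 𝕜] {P : Matrix n n 𝕜}
    (hP : P.PosDef) {M : Matrix n m 𝕜} : Mᴴ * P * M = 0 ↔ M = 0 := by
  refine ⟨fun h => ext_iff_mulVec.mpr fun v => ?_, fun h => by simp [h]⟩
  have hquad : star (M *ᵥ v) ⬝ᵥ P *ᵥ (M *ᵥ v) = star v ⬝ᵥ (Mᴴ * P * M) *ᵥ v := by
    simp only [star_mulVec, dotProduct_mulVec, vecMul_vecMul, mulVec_mulVec, Matrix.mul_assoc]
  rw [zero_mulVec]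
  by_contra hMv
  have hpos := hP.dotProduct_mulVec_pos hMv
  rw [hquad, h, zero_mulVec, dotProduct_zero] at hpos
  exact hpos.false

theorem PosDef.trace_conjTranspose_mul_mul_same_eq_zero_iff [RCLike 𝕜] {P : Matrix n n 𝕜}
    (hP : P.PosDef) {M : Matrix n m 𝕜} : (Mᴴ * P * M).trace = 0 ↔ M = 0 :=
  (hP.posSemidef.conjTranspose_mul_mul_same M).trace_eq_zero_iff.trans
    hP.conjTranspose_mul_mul_same_eq_zero_iff

end Matrix

theorem configuration_error_nonneg_and_eq_zero_iff_general
    (P : Matrix (Fin 3) (Fin 3) ℝ) (hPpos : P.PosDef)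
    (R : Matrix (Fin 3) (Fin 3) ℝ) (hR : R ∈ SO3) :
    0 ≤ ψ P R ∧ (ψ P R = 0 ↔ R = 1) := by
  have hψ : ψ P R = (1 / 4 : ℝ) * ((1 - R)ᴴ * P * (1 - R)).trace := by
    rw [ψ, conjTranspose_eq_transpose_of_trivial,
      trace_transpose_mul_mul_one_sub_eq (isHermitian_iff_isSymm.mp hPpos.isHermitian) hR.1]
    ring
  have hnonneg := (hPpos.posSemidef.conjTranspose_mul_mul_same (1 - R)).trace_nonneg
  refine ⟨hψ ▸ mul_nonneg (by norm_num) hnonneg, ?_⟩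
  rw [hψ, mul_eq_zero, hPpos.trace_conjTranspose_mul_mul_same_eq_zero_iff, sub_eq_zero]
  norm_num [eq_comm]

/-- For symmetric positive definite `P`, the configuration error function is nonnegative on
`SO(3)` and vanishes exactly at the identity. -/
theorem configuration_error_nonneg_and_eq_zero_iff
    (P : Matrix (Fin 3) (Fin 3) ℝ) (hPsymm : P.IsSymm) (hPpos : P.PosDef)
    (R : Matrix (Fin 3) (Fin 3) ℝ) (hR : R ∈ SO3) :
    0 ≤ ψ P R ∧ (ψ P R = 0 ↔ R = 1) :=
  configuration_error_nonneg_and_eq_zero_iff_general P hPpos R hR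
end
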